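/- Let λ₁ ≠ 0, λ₂ ≠ 0 with λ₁ ≠ λ₂, let H, c be real numbers with c > 0, and suppose: λ₁(λ₂ − λ₁)·h₁₁₁₁ = 2λ₂·c and λ₁(λ₂ − λ₁)·h₁₁₂₂ = 2λ₁·c for some reals h₁₁₁₁, h₁₁₂₂; moreover λ₂·H + 1 = 0 and λ₂(−λ₁ − H·λ₁²) + (λ₁ − λ₂)·h₁₁₁₁ = −2c. Then c = −λ₁²/2, contradicting c > 0. -/

import Mathlib

/-! Eliminating `h1111` and `H` from the three equations leaves `(l1 - l2) * (l1 ^ 2 + 2 * c) = 0`,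
so `c = -l1 ^ 2 / 2 ≤ 0`. -/

theorem eq_neg_sq_div_two_of_principal_curvature_eqs {l1 l2 H c h1111 : ℝ} (h12 : l1 ≠ l2)
    (e1 : l1 * (l2 - l1) * h1111 = 2 * l2 * c)
    (e3 : l2 * H + 1 = 0)
    (e4 : l2 * (-l1 - H * l1 ^ 2) + (l1 - l2) * h1111 = -2 * c) :
    c = -l1 ^ 2 / 2 := by
  have key : (l1 - l2) * (l1 ^ 2 + 2 * c) = (l1 - l2) * 0 := by
    linear_combination l1 * e4 + l1 ^ 3 * e3 + e1
  linear_combination mul_left_cancel₀ (sub_ne_zero.mpr h12) key / 2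

theorem stmt10_general (l1 l2 H c h1111 : ℝ)
    (h12 : l1 ≠ l2) (hc : 0 < c)
    (e1 : l1 * (l2 - l1) * h1111 = 2 * l2 * c)
    (e3 : l2 * H + 1 = 0)
    (e4 : l2 * (-l1 - H * l1^2) + (l1 - l2) * h1111 = -2 * c) : False := by
  have hc_eq := eq_neg_sq_div_two_of_principal_curvature_eqs h12 e1 e3 e4
  linarith [sq_nonneg l1]

theorem stmt10 (l1 l2 H c h1111 h1122 : ℝ) (h1 : l1 ≠ 0) (h2 : l2 ≠ 0)
    (h12 : l1 ≠ l2) (hc : 0 < c)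
    (e1 : l1 * (l2 - l1) * h1111 = 2 * l2 * c)
    (e2 : l1 * (l2 - l1) * h1122 = 2 * l1 * c)
    (e3 : l2 * H + 1 = 0)
    (e4 : l2 * (-l1 - H * l1^2) + (l1 - l2) * h1111 = -2 * c) : False :=
  stmt10_general l1 l2 H c h1111 h12 hc e1 e3 e4
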